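/- arXiv:1603.06145 — 3 statements merged into one kernel-verified Lean document; each statement's English description precedes it below -/
import Mathlib

section
/- Let ξ: Ω → ℝ^q be a random vector with coordinates in L⁴ and Var(ξ) invertible, η: Ω → ℝ a random variable in L⁴, and W: Ω → ℝ^m a random vector. Suppose (a) the conditional expectation of η given σ(ξ) is linear, i.e. E[η | σ(ξ)] = E*(η | ξ) almost surely, and (b) σ(η) and σ(W) are conditionally independent given σ(ξ). Then for every bounded measurable φ: ℝ^q × ℝ^m → ℝ, one has E[(η − E*(η | ξ)) φ(ξ, W)] = 0, and consequently E[Cov*(η, φ(ξ, W) | ξ)] = 0. -/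
open MeasureTheory Matrix

/-- Mean vector of a random vector. -/
noncomputable def vmean {Ω : Type*} [MeasurableSpace Ω] (μ : Measure Ω)
    {ι : Type*} (ζ : Ω → ι → ℝ) : ι → ℝ :=
  fun i => ∫ ω, ζ ω i ∂μ

/-- Covariance matrix `Cov(ζ, ξ) = E[(ζ − Eζ)(ξ − Eξ)ᵀ]`. -/
noncomputable def covMatrix {Ω : Type*} [MeasurableSpace Ω] (μ : Measure Ω)
    {ι κ : Type*} (ζ : Ω → ι → ℝ) (ξ : Ω → κ → ℝ) : Matrix ι κ ℝ :=
  Matrix.of fun i j =>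
    ∫ ω, (ζ ω i - vmean μ ζ i) * (ξ ω j - vmean μ ξ j) ∂μ

/-- Variance matrix `Var(ξ) = E[(ξ − Eξ)(ξ − Eξ)ᵀ]`. -/
noncomputable def varMatrix {Ω : Type*} [MeasurableSpace Ω] (μ : Measure Ω)
    {ι : Type*} (ξ : Ω → ι → ℝ) : Matrix ι ι ℝ :=
  covMatrix μ ξ ξ

/-- Scalar covariance `Cov(ζ₁, ζ₂)`. -/
noncomputable def scov {Ω : Type*} [MeasurableSpace Ω] (μ : Measure Ω)
    (ζ₁ ζ₂ : Ω → ℝ) : ℝ :=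
  ∫ ω, (ζ₁ ω - ∫ ω', ζ₁ ω' ∂μ) * (ζ₂ ω - ∫ ω', ζ₂ ω' ∂μ) ∂μ

/-- Covariance vector `Cov(ζ, ξ) = E[(ζ − Eζ)(ξ − Eξ)ᵀ]` of a real random variable `ζ`
against a random vector `ξ`. -/
noncomputable def covVec {Ω : Type*} [MeasurableSpace Ω] (μ : Measure Ω)
    {κ : Type*} (ζ : Ω → ℝ) (ξ : Ω → κ → ℝ) : κ → ℝ :=
  fun i => ∫ ω, (ζ ω - ∫ ω', ζ ω' ∂μ) * (ξ ω i - vmean μ ξ i) ∂μ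

/-- Conditional linear expectation of a real random variable:
`E*(ζ | ξ) = E[ζ] + Cov(ζ, ξ) Var(ξ)⁻¹ (ξ − Eξ)`. -/
noncomputable def scle {Ω : Type*} [MeasurableSpace Ω] (μ : Measure Ω)
    {κ : Type*} [Fintype κ] [DecidableEq κ]
    (ζ : Ω → ℝ) (ξ : Ω → κ → ℝ) : Ω → ℝ :=
  fun ω => (∫ ω', ζ ω' ∂μ) +
    ∑ i, covVec μ ζ ξ i *
      (varMatrix μ ξ)⁻¹.mulVec (fun i' => ξ ω i' - vmean μ ξ i') i

/-- Conditional linear covariance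
`Cov*(ζ₁, ζ₂ | ξ) = E*((ζ₁ − E*(ζ₁|ξ))(ζ₂ − E*(ζ₂|ξ)) | ξ)`. -/
noncomputable def ccov {Ω : Type*} [MeasurableSpace Ω] (μ : Measure Ω)
    {κ : Type*} [Fintype κ] [DecidableEq κ]
    (ζ₁ ζ₂ : Ω → ℝ) (ξ : Ω → κ → ℝ) : Ω → ℝ :=
  scle μ (fun ω => (ζ₁ ω - scle μ ζ₁ ξ ω) * (ζ₂ ω - scle μ ζ₂ ξ ω)) ξ

/-!
Write `r = η − E*(η | ξ)`; by (a), `r = η − E[η | σ(ξ)]`. For `A ∈ σ(ξ)` and bounded `f`, `g`,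
conditional independence (b) gives `E[1_A f(η) g(W)] = E[1_A f(η) E[g(W) | σ(ξ)]]`; truncation
extends this to `f(η) = η`, and pulling `E[g(W) | σ(ξ)]` back out against `E[η | σ(ξ)]` yields
`E[1_A r g(W)] = 0`. Thus `r` integrates to zero over every rectangle `{ξ ∈ S, W ∈ T}`, hence by
the π-λ theorem over every set of `σ(ξ, W)`, so `E[r | σ(ξ, W)] = 0` and `E[r φ(ξ, W)] = 0`.

For the second claim, `E[Cov*(η, ζ | ξ)] = E[r ζ] − E[r E*(ζ | ξ)]`, and the normal equations
make `r` orthogonal to constants and to `ξ − Eξ`, hence to the affine function `E*(ζ | ξ)`.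
-/

open Filter Topology
open scoped ENNReal

section LinearPrediction

variable {Ω κ : Type*} [MeasurableSpace Ω] {μ : Measure Ω} {ξ : Ω → κ → ℝ}

lemma integral_sub_vmean [IsProbabilityMeasure μ] {j : κ}
    (hξ : Integrable (fun ω => ξ ω j) μ) : ∫ ω, (ξ ω j - vmean μ ξ j) ∂μ = 0 := by
  rw [integral_sub hξ (integrable_const _)]
  simp [vmean]

variable [Fintype κ]

lemma integral_mul_affine (c : ℝ) (b a : κ → ℝ) {r : Ω → ℝ} (hr : Integrable r μ)
    (hrξ : ∀ j, Integrable (fun ω => r ω * (ξ ω j - a j)) μ) :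
    ∫ ω, r ω * (c + ∑ j, b j * (ξ ω j - a j)) ∂μ =
      c * ∫ ω, r ω ∂μ + ∑ j, b j * ∫ ω, r ω * (ξ ω j - a j) ∂μ := by
  have hterm : ∀ j, Integrable (fun ω => b j * (r ω * (ξ ω j - a j))) μ :=
    fun j => (hrξ j).const_mul (b j)
  simp_rw [mul_add, Finset.mul_sum, mul_left_comm (r _), mul_comm (r _) c]
  rw [integral_add (hr.const_mul c) (integrable_finsetSum _ fun j _ => hterm j),
    integral_const_mul, integral_finsetSum _ fun j _ => hterm j]
  simp_rw [integral_const_mul]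

lemma memLp_affine [IsFiniteMeasure μ] {p : ℝ≥0∞} (hξ : ∀ j, MemLp (fun ω => ξ ω j) p μ)
    (c : ℝ) (b a : κ → ℝ) : MemLp (fun ω => c + ∑ j, b j * (ξ ω j - a j)) p μ :=
  (memLp_const c).add <| memLp_finsetSum _ fun j _ =>
    ((hξ j).sub (memLp_const (a j))).const_mul (b j)

variable [DecidableEq κ]

lemma scle_apply (ζ : Ω → ℝ) (ξ : Ω → κ → ℝ) (ω : Ω) :
    scle μ ζ ξ ω = (∫ ω', ζ ω' ∂μ) +
      ∑ j, (covVec μ ζ ξ ᵥ* (varMatrix μ ξ)⁻¹) j * (ξ ω j - vmean μ ξ j) :=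
  congrArg (_ + ·) (dotProduct_mulVec _ _ _)

lemma memLp_scle [IsFiniteMeasure μ] {p : ℝ≥0∞} (hξ : ∀ j, MemLp (fun ω => ξ ω j) p μ)
    (ζ : Ω → ℝ) : MemLp (scle μ ζ ξ) p μ := by
  simpa only [← scle_apply] using
    memLp_affine hξ (∫ ω, ζ ω ∂μ) (covVec μ ζ ξ ᵥ* (varMatrix μ ξ)⁻¹) (vmean μ ξ)

lemma integral_scle [IsProbabilityMeasure μ] (hξ : ∀ j, Integrable (fun ω => ξ ω j) μ)
    (ζ : Ω → ℝ) : ∫ ω, scle μ ζ ξ ω ∂μ = ∫ ω, ζ ω ∂μ := by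
  have hcen : ∀ j, Integrable (fun ω => ξ ω j - vmean μ ξ j) μ :=
    fun j => (hξ j).sub (integrable_const _)
  have h := integral_mul_affine (μ := μ) (ξ := ξ) (∫ ω, ζ ω ∂μ)
    (covVec μ ζ ξ ᵥ* (varMatrix μ ξ)⁻¹) (vmean μ ξ) (integrable_const 1)
    fun j => by simpa only [one_mul] using hcen j
  simp only [one_mul, ← scle_apply, integral_sub_vmean (hξ _)] at h
  simpa using h

variable [IsProbabilityMeasure μ] (hξ : ∀ j, MemLp (fun ω => ξ ω j) 2 μ)
  (hV : IsUnit (varMatrix μ ξ))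
include hξ hV

/-- The normal equations of linear regression. -/
lemma integral_sub_scle_mul_sub_vmean {ζ : Ω → ℝ} (hζ : MemLp ζ 2 μ) (j : κ) :
    ∫ ω, (ζ ω - scle μ ζ ξ ω) * (ξ ω j - vmean μ ξ j) ∂μ = 0 := by
  set b := covVec μ ζ ξ ᵥ* (varMatrix μ ξ)⁻¹
  have hcen : ∀ k, MemLp (fun ω => ξ ω k - vmean μ ξ k) 2 μ :=
    fun k => (hξ k).sub (memLp_const _)
  have hpred := integral_mul_affine (μ := μ) (ξ := ξ) 0 b (vmean μ ξ)
    ((hcen j).integrable one_le_two) fun k => (hcen j).integrable_mul (hcen k)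
  have hcov : Integrable (fun ω => (ζ ω - ∫ ω', ζ ω' ∂μ) * (ξ ω j - vmean μ ξ j)) μ :=
    (hζ.sub (memLp_const _)).integrable_mul (hcen j)
  have hb : b ᵥ* varMatrix μ ξ = covVec μ ζ ξ := by
    rw [vecMul_vecMul, nonsing_inv_mul _ ((isUnit_iff_isUnit_det _).mp hV), vecMul_one]
  calc ∫ ω, (ζ ω - scle μ ζ ξ ω) * (ξ ω j - vmean μ ξ j) ∂μ
      = ∫ ω, ((ζ ω - ∫ ω', ζ ω' ∂μ) * (ξ ω j - vmean μ ξ j)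
          - (ξ ω j - vmean μ ξ j) * (0 + ∑ k, b k * (ξ ω k - vmean μ ξ k))) ∂μ := by
        congr with ω; rw [scle_apply]; ring
    _ = covVec μ ζ ξ j - (b ᵥ* varMatrix μ ξ) j := by
        have hpred_int : Integrable (fun ω => (ξ ω j - vmean μ ξ j) *
            (0 + ∑ k, b k * (ξ ω k - vmean μ ξ k))) μ :=
          (hcen j).integrable_mul (memLp_affine hξ 0 b (vmean μ ξ))
        rw [integral_sub hcov hpred_int, hpred]
        simp [vecMul, dotProduct, varMatrix, covMatrix, covVec, mul_comm]
    _ = 0 := by rw [hb, sub_self]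

lemma integral_sub_scle_mul_scle {ζ : Ω → ℝ} (hζ : MemLp ζ 2 μ) (ζ' : Ω → ℝ) :
    ∫ ω, (ζ ω - scle μ ζ ξ ω) * scle μ ζ' ξ ω ∂μ = 0 := by
  have hres : MemLp (fun ω => ζ ω - scle μ ζ ξ ω) 2 μ := hζ.sub (memLp_scle hξ ζ)
  have hres_int : ∫ ω, (ζ ω - scle μ ζ ξ ω) ∂μ = 0 := by
    rw [integral_sub (hζ.integrable one_le_two) (memLp_scle hξ ζ |>.integrable one_le_two),
      integral_scle (fun j => (hξ j).integrable one_le_two), sub_self]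
  have h := integral_mul_affine (μ := μ) (ξ := ξ) (∫ ω, ζ' ω ∂μ)
    (covVec μ ζ' ξ ᵥ* (varMatrix μ ξ)⁻¹) (vmean μ ξ) (hres.integrable one_le_two)
    fun j => hres.integrable_mul ((hξ j).sub (memLp_const _))
  simp only [← scle_apply, hres_int, integral_sub_scle_mul_sub_vmean hξ hV hζ] at h
  simpa using h

lemma integral_ccov {ζ₁ ζ₂ : Ω → ℝ} (hζ₁ : MemLp ζ₁ 2 μ) (hζ₂ : MemLp ζ₂ 2 μ) :
    ∫ ω, ccov μ ζ₁ ζ₂ ξ ω ∂μ = ∫ ω, (ζ₁ ω - scle μ ζ₁ ξ ω) * ζ₂ ω ∂μ := by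
  have hres : MemLp (fun ω => ζ₁ ω - scle μ ζ₁ ξ ω) 2 μ := hζ₁.sub (memLp_scle hξ ζ₁)
  have h₂ : Integrable (fun ω => (ζ₁ ω - scle μ ζ₁ ξ ω) * ζ₂ ω) μ := hres.integrable_mul hζ₂
  have hs₂ : Integrable (fun ω => (ζ₁ ω - scle μ ζ₁ ξ ω) * scle μ ζ₂ ξ ω) μ :=
    hres.integrable_mul (memLp_scle hξ ζ₂)
  rw [ccov, integral_scle (fun j => (hξ j).integrable one_le_two)]
  simp_rw [mul_sub]
  rw [integral_sub h₂ hs₂, integral_sub_scle_mul_scle hξ hV hζ₁, sub_zero]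

end LinearPrediction

section CondExp

variable {Ω : Type*} {m mΩ : MeasurableSpace Ω} {μ : Measure Ω}

lemma setIntegral_condExp_mul (hm : m ≤ mΩ) [SigmaFinite (μ.trim hm)] {f k : Ω → ℝ}
    {s : Set Ω} (hs : MeasurableSet[m] s) (hk : AEStronglyMeasurable[m] k μ)
    (hfk : Integrable (fun x => f x * k x) μ) (hf : Integrable f μ) :
    ∫ x in s, μ[f | m] x * k x ∂μ = ∫ x in s, f x * k x ∂μ := by
  rw [← setIntegral_condExp hm hfk hs]
  exact setIntegral_congr_ae (hm s hs)
    ((condExp_mul_of_aestronglyMeasurable_right hk hfk hf).mono fun x hx _ => hx.symm)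

lemma setIntegral_eq_zero_of_isPiSystem {C : Set (Set Ω)} (hm : m ≤ mΩ)
    (hgen : m = MeasurableSpace.generateFrom C) (hC : IsPiSystem C) {r : Ω → ℝ}
    (hr : Integrable r μ) (huniv : ∫ x, r x ∂μ = 0) (hCr : ∀ s ∈ C, ∫ x in s, r x ∂μ = 0)
    {s : Set Ω} (hs : MeasurableSet[m] s) : ∫ x in s, r x ∂μ = 0 := by
  induction s, hs using MeasurableSpace.induction_on_inter hgen hC with
  | empty => simp
  | basic s hs => exact hCr s hs
  | compl s hs ih => linarith [integral_add_compl (hm s hs) hr]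
  | iUnion f hdisj hf ih =>
    rw [integral_iUnion (fun i => hm _ (hf i)) hdisj hr.integrableOn]
    simp [ih]

lemma integral_mul_eq_zero_of_forall_setIntegral_eq_zero (hm : m ≤ mΩ) [IsFiniteMeasure μ]
    {r h : Ω → ℝ} {B : ℝ} (hr : Integrable r μ)
    (hset : ∀ s, MeasurableSet[m] s → ∫ x in s, r x ∂μ = 0)
    (hh : StronglyMeasurable[m] h) (hhB : ∀ x, |h x| ≤ B) :
    ∫ x, r x * h x ∂μ = 0 := by
  have hcond : 0 =ᵐ[μ] μ[r | m] :=
    ae_eq_condExp_of_forall_setIntegral_eq hm hr (fun _ _ _ => integrableOn_zero)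
      (fun s hs _ => by simp [hset s hs]) aestronglyMeasurable_zero
  have hrh : Integrable (fun x => r x * h x) μ :=
    hr.mul_bdd (hh.mono hm).aestronglyMeasurable (ae_of_all _ hhB)
  rw [← setIntegral_univ, ← setIntegral_condExp_mul hm MeasurableSet.univ
    hh.aestronglyMeasurable hrh hr, setIntegral_univ,
    integral_congr_ae (hcond.mono fun x hx => by rw [← hx, Pi.zero_apply, zero_mul]),
    integral_zero]

end CondExp

lemma integral_mul_comp_prodMk_eq_zero {Ω α β : Type*} [MeasurableSpace Ω] [MeasurableSpace α]
    [MeasurableSpace β] {μ : Measure Ω} [IsFiniteMeasure μ] {X : Ω → α} {Y : Ω → β}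
    (hX : Measurable X) (hY : Measurable Y) {r : Ω → ℝ} (hr : Integrable r μ)
    (hrect : ∀ S T, MeasurableSet S → MeasurableSet T → ∫ x in X ⁻¹' S ∩ Y ⁻¹' T, r x ∂μ = 0)
    {φ : α × β → ℝ} {B : ℝ} (hφ : Measurable φ) (hφB : ∀ z, |φ z| ≤ B) :
    ∫ x, r x * φ (X x, Y x) ∂μ = 0 := by
  set Z := fun x => (X x, Y x)
  have hgen : MeasurableSpace.comap Z inferInstance = MeasurableSpace.generateFrom
      {s | ∃ t ∈ Set.image2 (· ×ˢ ·) {S : Set α | MeasurableSet S} {T : Set β | MeasurableSet T},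
        Z ⁻¹' t = s} := by
    rw [← generateFrom_prod, MeasurableSpace.comap_generateFrom]
    rfl
  have hCr : ∀ s ∈ {s | ∃ t ∈ Set.image2 (· ×ˢ ·) {S : Set α | MeasurableSet S}
      {T : Set β | MeasurableSet T}, Z ⁻¹' t = s}, ∫ x in s, r x ∂μ = 0 := by
    rintro _ ⟨_, ⟨S, hS, T, hT, rfl⟩, rfl⟩
    exact hrect S T hS hT
  have huniv : ∫ x, r x ∂μ = 0 := by
    simpa using hrect Set.univ Set.univ MeasurableSet.univ MeasurableSet.univ
  exact integral_mul_eq_zero_of_forall_setIntegral_eq_zero (hX.prodMk hY).comap_le hr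
    (fun s hs => setIntegral_eq_zero_of_isPiSystem (hX.prodMk hY).comap_le hgen
      (isPiSystem_prod.comap Z) hr huniv hCr hs)
    (hφ.comp (comap_measurable Z)).stronglyMeasurable fun x => hφB _

section CondIndep

variable {Ω : Type*} {m mΩ : MeasurableSpace Ω} {μ : Measure Ω}

lemma integral_mul_eq_of_forall_bounded_comp {η k k' : Ω → ℝ} {C : ℝ} (hη : Integrable η μ)
    (hk : AEStronglyMeasurable k μ) (hk' : AEStronglyMeasurable k' μ)
    (hkC : ∀ᵐ x ∂μ, |k x| ≤ C) (hk'C : ∀ᵐ x ∂μ, |k' x| ≤ C)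
    (h : ∀ f : ℝ → ℝ, Measurable f → (∃ B, ∀ y, |f y| ≤ B) →
      ∫ x, f (η x) * k x ∂μ = ∫ x, f (η x) * k' x ∂μ) :
    ∫ x, η x * k x ∂μ = ∫ x, η x * k' x ∂μ := by
  let t : ℕ → ℝ → ℝ := fun N y => max (-N) (min N y)
  have ht_cont (N : ℕ) : Continuous (t N) :=
    continuous_const.max (continuous_const.min continuous_id)
  have ht_lim (y : ℝ) : Tendsto (fun N => t N y) atTop (𝓝 y) := by
    refine tendsto_const_nhds.congr' ?_
    filter_upwards [eventually_ge_atTop ⌈|y|⌉₊] with N hN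
    have hy := abs_le.mp ((Nat.le_ceil _).trans (Nat.cast_le.mpr hN))
    simp only [t, min_eq_right hy.2, max_eq_right hy.1]
  have hlim (g : Ω → ℝ) (hg : AEStronglyMeasurable g μ) (hgC : ∀ᵐ x ∂μ, |g x| ≤ C) :
      Tendsto (fun N => ∫ x, t N (η x) * g x ∂μ) atTop (𝓝 (∫ x, η x * g x ∂μ)) := by
    refine tendsto_integral_of_dominated_convergence (fun x => |η x| * C)
      (fun N => ((ht_cont N).comp_aestronglyMeasurable hη.1).mul hg) (hη.abs.mul_const C)
      (fun N => hgC.mono fun x hx => ?_) (ae_of_all _ fun x => (ht_lim _).mul_const _)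
    rw [Real.norm_eq_abs, abs_mul]
    exact mul_le_mul (by grind [abs_le]) hx (abs_nonneg _) (abs_nonneg _)
  exact tendsto_nhds_unique ((hlim k hk hkC).congr fun N =>
    h _ (ht_cont N).measurable ⟨N, fun y => by grind [abs_le]⟩) (hlim k' hk' hk'C)

variable {β : Type*} [MeasurableSpace β] [IsFiniteMeasure μ] {η : Ω → ℝ} {W : Ω → β}
  (hm : m ≤ mΩ) (hη : Integrable η μ) (hW : Measurable W)
  (hci : ∀ (f : ℝ → ℝ) (g : β → ℝ), Measurable f → Measurable g →
    (∃ Bf, ∀ x, |f x| ≤ Bf) → (∃ Bg, ∀ x, |g x| ≤ Bg) →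
    μ[fun ω => f (η ω) * g (W ω) | m]
      =ᵐ[μ] fun ω => ((μ[fun ω' => f (η ω') | m]) ω) * ((μ[fun ω' => g (W ω') | m]) ω))
include hm hη hW hci

lemma setIntegral_comp_mul_comp_eq_mul_condExp {f : ℝ → ℝ} {g : β → ℝ} {Bf B : ℝ}
    (hf : Measurable f) (hfB : ∀ y, |f y| ≤ Bf) (hg : Measurable g) (hgB : ∀ y, |g y| ≤ B)
    {s : Set Ω} (hs : MeasurableSet[m] s) :
    ∫ x in s, f (η x) * g (W x) ∂μ = ∫ x in s, f (η x) * μ[fun x => g (W x) | m] x ∂μ := by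
  have hfη : Integrable (fun x => f (η x)) μ :=
    .of_bound (hf.comp_aemeasurable hη.1.aemeasurable).aestronglyMeasurable Bf
      (ae_of_all _ fun x => hfB _)
  have hgW : Integrable (fun x => g (W x)) μ :=
    .of_bound (hg.comp hW).aestronglyMeasurable B (ae_of_all _ fun x => hgB _)
  calc ∫ x in s, f (η x) * g (W x) ∂μ
      = ∫ x in s, μ[fun x => f (η x) * g (W x) | m] x ∂μ :=
        (setIntegral_condExp hm (hgW.bdd_mul hfη.1 (ae_of_all _ fun x => hfB _)) hs).symm
    _ = ∫ x in s, μ[fun x => f (η x) | m] x * μ[fun x => g (W x) | m] x ∂μ :=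
        setIntegral_congr_ae (hm s hs)
          ((hci f g hf hg ⟨Bf, hfB⟩ ⟨B, hgB⟩).mono fun x hx _ => hx)
    _ = ∫ x in s, f (η x) * μ[fun x => g (W x) | m] x ∂μ :=
        setIntegral_condExp_mul hm hs stronglyMeasurable_condExp.aestronglyMeasurable
          (hfη.mul_bdd integrable_condExp.1 (ae_bdd_abs_condExp_of_ae_bdd_abs
            (ae_of_all _ fun x => hgB _))) hfη

lemma setIntegral_mul_comp_eq_condExp_mul {g : β → ℝ} {B : ℝ} (hg : Measurable g)
    (hgB : ∀ y, |g y| ≤ B) {s : Set Ω} (hs : MeasurableSet[m] s) :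
    ∫ x in s, η x * g (W x) ∂μ = ∫ x in s, μ[η | m] x * g (W x) ∂μ := by
  set gm := μ[fun x => g (W x) | m]
  have hgW : Integrable (fun x => g (W x)) μ :=
    .of_bound (hg.comp hW).aestronglyMeasurable B (ae_of_all _ fun x => hgB _)
  have hgm : AEStronglyMeasurable gm μ := integrable_condExp.1
  have hgmB : ∀ᵐ x ∂μ, |gm x| ≤ B := ae_bdd_abs_condExp_of_ae_bdd_abs (ae_of_all _ fun x => hgB _)
  calc ∫ x in s, η x * g (W x) ∂μ
      = ∫ x in s, η x * gm x ∂μ :=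
        integral_mul_eq_of_forall_bounded_comp hη.restrict
          (hg.comp hW).aestronglyMeasurable.restrict hgm.restrict
          (ae_of_all _ fun x => hgB _) (ae_restrict_of_ae hgmB)
          fun f hf ⟨_, hfB⟩ =>
            setIntegral_comp_mul_comp_eq_mul_condExp hm hη hW hci hf hfB hg hgB hs
    _ = ∫ x in s, μ[η | m] x * gm x ∂μ :=
        (setIntegral_condExp_mul hm hs stronglyMeasurable_condExp.aestronglyMeasurable
          (hη.mul_bdd hgm hgmB) hη).symm
    _ = ∫ x in s, g (W x) * μ[η | m] x ∂μ := by
        simp_rw [mul_comm (μ[η | m] _)]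
        exact setIntegral_condExp_mul hm hs stronglyMeasurable_condExp.aestronglyMeasurable
          (integrable_condExp.bdd_mul (hg.comp hW).aestronglyMeasurable
            (ae_of_all _ fun x => hgB _)) hgW
    _ = ∫ x in s, μ[η | m] x * g (W x) ∂μ := by simp_rw [mul_comm (g _)]

lemma setIntegral_inter_preimage_sub_condExp_eq_zero {s : Set Ω} {T : Set β}
    (hs : MeasurableSet[m] s) (hT : MeasurableSet T) :
    ∫ x in s ∩ W ⁻¹' T, (η x - μ[η | m] x) ∂μ = 0 := by
  have htB (y : β) : |T.indicator 1 y| ≤ (1 : ℝ) := by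
    by_cases hy : y ∈ T <;> simp [hy]
  have ht (f : Ω → ℝ) (hf : Integrable f μ) :
      IntegrableOn (fun x => f x * T.indicator 1 (W x)) s μ :=
    (hf.mul_bdd ((measurable_one.indicator hT).comp hW).aestronglyMeasurable
      (ae_of_all _ fun x => htB _)).integrableOn
  have hind : (W ⁻¹' T).indicator (fun x => η x - μ[η | m] x)
      = fun x => η x * T.indicator 1 (W x) - μ[η | m] x * T.indicator 1 (W x) := by
    ext x; by_cases hx : W x ∈ T <;> simp [hx]
  rw [← setIntegral_indicator (hW hT), hind, integral_sub (ht η hη) (ht _ integrable_condExp),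
    setIntegral_mul_comp_eq_condExp_mul hm hη hW hci (measurable_one.indicator hT) htB hs,
    sub_self]

end CondIndep

theorem residual_orthogonal_of_condIndep_general {Ω : Type*} [MeasurableSpace Ω] (μ : Measure Ω)
    [IsProbabilityMeasure μ] {q m : ℕ}
    (ξ : Ω → Fin q → ℝ) (η : Ω → ℝ) (W : Ω → Fin m → ℝ)
    (hξmeas : Measurable ξ) (hWmeas : Measurable W)
    (hη : MemLp η 4 μ) (hξ : ∀ i, MemLp (fun ω => ξ ω i) 4 μ)
    (hVar : IsUnit (varMatrix μ ξ))
    -- (a) the conditional expectation of `η` given `σ(ξ)` is linear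
    (hlin : μ[η | MeasurableSpace.comap ξ inferInstance] =ᵐ[μ] scle μ η ξ)
    -- (b) `σ(η)` and `σ(W)` are conditionally independent given `σ(ξ)`
    (hci : ∀ (f : ℝ → ℝ) (g : (Fin m → ℝ) → ℝ), Measurable f → Measurable g →
      (∃ Bf, ∀ x, |f x| ≤ Bf) → (∃ Bg, ∀ x, |g x| ≤ Bg) →
      μ[fun ω => f (η ω) * g (W ω) | MeasurableSpace.comap ξ inferInstance]
        =ᵐ[μ] fun ω => ((μ[fun ω' => f (η ω') | MeasurableSpace.comap ξ inferInstance]) ω)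
          * ((μ[fun ω' => g (W ω') | MeasurableSpace.comap ξ inferInstance]) ω)) :
    ∀ φ : (Fin q → ℝ) × (Fin m → ℝ) → ℝ, Measurable φ → (∃ B, ∀ x, |φ x| ≤ B) →
      (∫ ω, (η ω - scle μ η ξ ω) * φ (ξ ω, W ω) ∂μ = 0) ∧
      (∫ ω, ccov μ η (fun ω' => φ (ξ ω', W ω')) ξ ω ∂μ = 0) := by
  rintro φ hφ ⟨B, hB⟩
  have hη₂ : MemLp η 2 μ := hη.mono_exponent (by norm_num)
  have hξ₂ : ∀ i, MemLp (fun ω => ξ ω i) 2 μ := fun i => (hξ i).mono_exponent (by norm_num)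
  have hφ₂ : MemLp (fun ω => φ (ξ ω, W ω)) 2 μ :=
    .of_bound (hφ.comp (hξmeas.prodMk hWmeas)).aestronglyMeasurable B (ae_of_all _ fun _ => hB _)
  have horth : ∫ ω, (η ω - scle μ η ξ ω) * φ (ξ ω, W ω) ∂μ = 0 := by
    refine integral_mul_comp_prodMk_eq_zero hξmeas hWmeas
      ((hη₂.sub (memLp_scle hξ₂ η)).integrable one_le_two) (fun S T hS hT => ?_) hφ hB
    calc ∫ ω in ξ ⁻¹' S ∩ W ⁻¹' T, (η ω - scle μ η ξ ω) ∂μ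
        = ∫ ω in ξ ⁻¹' S ∩ W ⁻¹' T,
            (η ω - μ[η | MeasurableSpace.comap ξ inferInstance] ω) ∂μ :=
          setIntegral_congr_ae ((hξmeas hS).inter (hWmeas hT))
            (hlin.mono fun ω hω _ => by rw [hω])
      _ = 0 := setIntegral_inter_preimage_sub_condExp_eq_zero hξmeas.comap_le
          (hη₂.integrable one_le_two) hWmeas hci ⟨S, hS, rfl⟩ hT
  exact ⟨horth, by rw [integral_ccov hξ₂ hVar hη₂ hφ₂, horth]⟩

/-- If the conditional expectation of `η` given `σ(ξ)` is linear and `σ(η)`,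
`σ(W)` are conditionally independent given `σ(ξ)`, then the residual `η − E*(η | ξ)` is
orthogonal to every bounded measurable function `φ(ξ, W)`, and consequently
`E[Cov*(η, φ(ξ, W) | ξ)] = 0`. -/
theorem residual_orthogonal_of_condIndep {Ω : Type*} [MeasurableSpace Ω] (μ : Measure Ω)
    [IsProbabilityMeasure μ] {q m : ℕ}
    (ξ : Ω → Fin q → ℝ) (η : Ω → ℝ) (W : Ω → Fin m → ℝ)
    (hξmeas : Measurable ξ) (hηmeas : Measurable η) (hWmeas : Measurable W)
    (hη : MemLp η 4 μ) (hξ : ∀ i, MemLp (fun ω => ξ ω i) 4 μ)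
    (hVar : IsUnit (varMatrix μ ξ))
    -- (a) the conditional expectation of `η` given `σ(ξ)` is linear
    (hlin : μ[η | MeasurableSpace.comap ξ inferInstance] =ᵐ[μ] scle μ η ξ)
    -- (b) `σ(η)` and `σ(W)` are conditionally independent given `σ(ξ)`
    (hci : ∀ (f : ℝ → ℝ) (g : (Fin m → ℝ) → ℝ), Measurable f → Measurable g →
      (∃ Bf, ∀ x, |f x| ≤ Bf) → (∃ Bg, ∀ x, |g x| ≤ Bg) →
      μ[fun ω => f (η ω) * g (W ω) | MeasurableSpace.comap ξ inferInstance]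
        =ᵐ[μ] fun ω => ((μ[fun ω' => f (η ω') | MeasurableSpace.comap ξ inferInstance]) ω)
          * ((μ[fun ω' => g (W ω') | MeasurableSpace.comap ξ inferInstance]) ω)) :
    ∀ φ : (Fin q → ℝ) × (Fin m → ℝ) → ℝ, Measurable φ → (∃ B, ∀ x, |φ x| ≤ B) →
      (∫ ω, (η ω - scle μ η ξ ω) * φ (ξ ω, W ω) ∂μ = 0) ∧
      (∫ ω, ccov μ η (fun ω' => φ (ξ ω', W ω')) ξ ω ∂μ = 0) :=
  residual_orthogonal_of_condIndep_general μ ξ η W hξmeas hWmeas hη hξ hVar hlin hci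
end

section
/- (Theorem 3, part 1, fixed-sample form) Fix integers n ≥ 1, q ≥ 0, a finite index set M with |M| = w, and constants M₀ > 0, c₂ > 0, K₂ > 0, 0 < κ < 1/2, 0 < ε₁ ≤ n^{−κ}/2, ε₂ ≥ 0, with n^{−κ} ≤ 6/(K₂ M₀ c₂). Suppose for each j ∈ M: (i) θ_j ∈ ℝ^{q+1} is a fixed vector and θ̂_j: Ω → ℝ^{q+1} a random vector; (ii) there are ℝ^{q+1}-valued random vectors V̂_j(θ̂_j) and V̂_j(θ_j) (the estimating function evaluated at θ̂_j and θ_j) with V̂_j(θ̂_j) = 0 almost surely and M₀ ‖θ̂_j − θ_j‖₂ ≤ ‖V̂_j(θ̂_j) − V̂_j(θ_j)‖₂ almost surely; (iii) V̂_j(θ_j) = (1/n) Σ_{i=1}^n W_{i,j} + Δ_j, where W_{1,j},…,W_{n,j} are i.i.d. mean-zero ℝ^{q+1}-valued random vectors each of whose coordinates is bounded by K₂ almost surely, and Δ_j is a random vector; (iv) P(∃ j ∈ M: ‖Δ_j‖₂ > M₀ c₂ ε₁ / 2) ≤ ε₂. Writing β̂_j and β_j for the last coordinates of θ̂_j and θ_j,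 it holds that P( max_{j∈M} |β̂_j − β_j| > (c₂/2) n^{−κ} ) ≤ 2 w (q+1) exp(−c₃ n^{1−2κ}) + ε₂, where c₃ := M₀² c₂² / (32 (q+1) (K₂² + 1)). -/
/-!
On the event where no remainder `Δ_j` is large, `V̂_j(θ̂_j) = 0` and the inversion condition give
`M₀ |β̂_j - β_j| ≤ ‖n⁻¹ ∑ᵢ W_{i,j}‖ + ‖Δ_j‖`, so a deviation of `β̂_j` beyond `(c₂/2) n^{-κ}` forces
`‖∑ᵢ W_{i,j}‖ > n M₀ c₂ n^{-κ} / 4`. Some coordinate of that sum then exceeds the same bound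
divided by `√(q+1)`; the summands are bounded and centred, hence sub-Gaussian (Hoeffding's lemma),
so each of these `2(q+1)` one-sided events has probability at most `exp(-c₃ n^{1-2κ})`.
A union bound over `j ∈ M` and the event where some `Δ_j` is large finishes the proof.
-/

open MeasureTheory ProbabilityTheory

lemma EuclideanSpace.exists_le_abs_apply_of_lt_norm {ι : Type*} [Fintype ι]
    {x : EuclideanSpace ℝ ι} {r : ℝ} (hr : 0 ≤ r) (hx : r < ‖x‖) :
    ∃ k, r / √(Fintype.card ι) ≤ |x k| := by
  by_contra! hlt
  have hnorm : ‖x‖ ^ 2 ≤ r ^ 2 := calc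
    ‖x‖ ^ 2 = ∑ k, |x k| ^ 2 := by simp [EuclideanSpace.real_norm_sq_eq]
    _ ≤ ∑ _k : ι, (r / √(Fintype.card ι)) ^ 2 :=
      Finset.sum_le_sum fun k _ => pow_le_pow_left₀ (abs_nonneg _) (hlt k).le 2
    _ = Fintype.card ι * (r ^ 2 / Fintype.card ι) := by
      rw [Finset.sum_const, Finset.card_univ, nsmul_eq_mul, div_pow,
        Real.sq_sqrt (Nat.cast_nonneg _)]
    _ ≤ r ^ 2 := by
      rcases eq_or_ne (Fintype.card ι : ℝ) 0 with h | h
      · simp [h, sq_nonneg]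
      · rw [mul_div_cancel₀ _ h]
  exact hx.not_ge ((sq_le_sq₀ (norm_nonneg x) hr).1 hnorm)

section Hoeffding

variable {Ω κ : Type*} {mΩ : MeasurableSpace Ω} {μ : Measure Ω} [IsProbabilityMeasure μ]
  [Fintype κ] {K : ℝ}

lemma hasSubgaussianMGF_of_abs_le_of_integral_eq_zero {X : Ω → ℝ} (hmeas : AEMeasurable X μ)
    (hbdd : ∀ᵐ ω ∂μ, |X ω| ≤ K) (hmean : μ[X] = 0) : HasSubgaussianMGF X (‖K‖₊ ^ 2) μ := by
  have h := hasSubgaussianMGF_of_mem_Icc_of_integral_eq_zero hmeas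
    (hbdd.mono fun ω hω => abs_le.1 hω) hmean
  convert h using 2
  ext
  simp [← two_mul]

lemma measure_abs_sum_ge_le_of_iIndepFun {X : κ → Ω → ℝ} (hindep : iIndepFun X μ)
    (hmeas : ∀ i, AEMeasurable (X i) μ) (hbdd : ∀ i, ∀ᵐ ω ∂μ, |X i ω| ≤ K)
    (hmean : ∀ i, μ[X i] = 0) {ε : ℝ} (hε : 0 ≤ ε) :
    μ {ω | ε ≤ |∑ i, X i ω|} ≤
      ENNReal.ofReal (2 * Real.exp (-ε ^ 2 / (2 * Fintype.card κ * K ^ 2))) := by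
  have hsubG i (_ : i ∈ Finset.univ) : HasSubgaussianMGF (X i) (‖K‖₊ ^ 2) μ :=
    hasSubgaussianMGF_of_abs_le_of_integral_eq_zero (hmeas i) (hbdd i) (hmean i)
  have hupper := HasSubgaussianMGF.measure_sum_ge_le_of_iIndepFun hindep hsubG hε
  have hlower := HasSubgaussianMGF.measure_sum_ge_le_of_iIndepFun
    (hindep.comp (fun _ x => -x) fun _ => measurable_neg) (fun i hi => (hsubG i hi).neg) hε
  simp only [Finset.sum_const, Finset.card_univ, nsmul_eq_mul, NNReal.coe_mul,
    NNReal.coe_natCast, NNReal.coe_pow, coe_nnnorm, Real.norm_eq_abs, sq_abs, ← mul_assoc,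
    Function.comp_apply] at hupper hlower
  calc μ {ω | ε ≤ |∑ i, X i ω|}
      ≤ μ ({ω | ε ≤ ∑ i, X i ω} ∪ {ω | ε ≤ ∑ i, -X i ω}) := by
        refine measure_mono fun ω hω => ?_
        simpa [Finset.sum_neg_distrib, le_abs] using hω
    _ ≤ μ {ω | ε ≤ ∑ i, X i ω} + μ {ω | ε ≤ ∑ i, -X i ω} :=
        measure_union_le _ _
    _ ≤ _ := by
        rw [← ofReal_measureReal, ← ofReal_measureReal, two_mul,
          ENNReal.ofReal_add (by positivity) (by positivity)]
        exact add_le_add (ENNReal.ofReal_le_ofReal hupper) (ENNReal.ofReal_le_ofReal hlower)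

lemma measure_norm_sum_gt_le_of_iIndepFun {ι : Type*} [Fintype ι]
    {W : κ → Ω → EuclideanSpace ℝ ι} (hindep : iIndepFun W μ)
    (hmeas : ∀ i, AEMeasurable (W i) μ) (hbdd : ∀ i k, ∀ᵐ ω ∂μ, |W i ω k| ≤ K)
    (hmean : ∀ i k, ∫ ω, W i ω k ∂μ = 0) {r : ℝ} (hr : 0 ≤ r) :
    μ {ω | r < ‖∑ i, W i ω‖} ≤ ENNReal.ofReal (2 * Fintype.card ι *
      Real.exp (-r ^ 2 / (2 * Fintype.card ι * Fintype.card κ * K ^ 2))) := by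
  set ε := r / √(Fintype.card ι)
  have hcoord (k : ι) : μ {ω | ε ≤ |∑ i, W i ω k|} ≤
      ENNReal.ofReal (2 * Real.exp (-r ^ 2 / (2 * Fintype.card ι * Fintype.card κ * K ^ 2))) := by
    have hproj : Measurable fun x : EuclideanSpace ℝ ι => x k :=
      (EuclideanSpace.proj (𝕜 := ℝ) k).continuous.measurable
    have h := measure_abs_sum_ge_le_of_iIndepFun (hindep.comp (fun _ x => x k) fun _ => hproj)
      (fun i => hproj.comp_aemeasurable (hmeas i)) (fun i => hbdd i k) (fun i => hmean i k)
      (by positivity : 0 ≤ ε)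
    rw [div_pow, Real.sq_sqrt (Nat.cast_nonneg _)] at h
    simp only [Function.comp_apply] at h
    convert h using 4
    ring
  calc μ {ω | r < ‖∑ i, W i ω‖}
      ≤ μ (⋃ k, {ω | ε ≤ |∑ i, W i ω k|}) := measure_mono fun ω hω => by
        simpa [WithLp.ofLp_sum] using EuclideanSpace.exists_le_abs_apply_of_lt_norm hr hω
    _ ≤ ∑ k, μ {ω | ε ≤ |∑ i, W i ω k|} := measure_iUnion_fintype_le _ _
    _ ≤ ∑ _k : ι, ENNReal.ofReal
          (2 * Real.exp (-r ^ 2 / (2 * Fintype.card ι * Fintype.card κ * K ^ 2))) :=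
        Finset.sum_le_sum fun k _ => hcoord k
    _ = _ := by
        rw [Finset.sum_const, Finset.card_univ, nsmul_eq_mul, ← ENNReal.ofReal_natCast,
          ← ENNReal.ofReal_mul (Nat.cast_nonneg _)]
        ring_nf

end Hoeffding

lemma lt_norm_of_mul_norm_sub_le_norm_smul_add {ι : Type*} [Fintype ι] {n M₀ c a ε₁ : ℝ}
    {θhat θ S Δ : EuclideanSpace ℝ ι} {k : ι} (hn : 0 < n) (hM₀ : 0 < M₀) (hc : 0 < c)
    (hε₁ : ε₁ ≤ a / 2) (hinv : M₀ * ‖θhat - θ‖ ≤ ‖n⁻¹ • S + Δ‖)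
    (hΔ : ‖Δ‖ ≤ M₀ * c * ε₁ / 2) (hk : c / 2 * a < |θhat k - θ k|) :
    n * (M₀ * (c * a / 4)) < ‖S‖ := by
  have hcoord : |θhat k - θ k| ≤ ‖θhat - θ‖ := by simpa using PiLp.norm_apply_le (θhat - θ) k
  have hsmul : ‖n⁻¹ • S + Δ‖ ≤ ‖S‖ / n + ‖Δ‖ := by
    simpa [norm_smul, abs_of_pos hn, div_eq_inv_mul] using norm_add_le (n⁻¹ • S) Δ
  have hscaled : M₀ * (c * a / 4) < ‖S‖ / n := by
    nlinarith [mul_lt_mul_of_pos_left hk hM₀, mul_le_mul_of_nonneg_left hcoord hM₀.le,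
      mul_le_mul_of_nonneg_left hε₁ (mul_pos hM₀ hc).le]
  rwa [lt_div_iff₀ hn, mul_comm] at hscaled

lemma Real.mul_rpow_neg_sq {x : ℝ} (hx : 0 < x) (κ : ℝ) :
    x * (x ^ (-κ)) ^ 2 = x ^ (1 - 2 * κ) := by
  rw [← Real.rpow_natCast, ← Real.rpow_mul hx.le, show 1 - 2 * κ = 1 + -κ * (2 : ℕ) by
    push_cast; ring, Real.rpow_add hx, Real.rpow_one]

lemma exp_neg_sq_div_le_exp_neg_mul_rpow {n d M₀ c K κ : ℝ} (hn : 0 < n) (hd : 0 < d)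
    (hK : K ≠ 0) :
    Real.exp (-(n * (M₀ * (c * n ^ (-κ) / 4))) ^ 2 / (2 * d * n * K ^ 2))
      ≤ Real.exp (-(M₀ ^ 2 * c ^ 2 / (32 * d * (K ^ 2 + 1))) * n ^ (1 - 2 * κ)) := by
  rw [Real.exp_le_exp, ← Real.mul_rpow_neg_sq hn]
  calc -(n * (M₀ * (c * n ^ (-κ) / 4))) ^ 2 / (2 * d * n * K ^ 2)
      = -(n * (n ^ (-κ)) ^ 2 * M₀ ^ 2 * c ^ 2 / (32 * d * K ^ 2)) := by
        field_simp
        ring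
    _ ≤ -(n * (n ^ (-κ)) ^ 2 * M₀ ^ 2 * c ^ 2 / (32 * d * (K ^ 2 + 1))) := by
        gcongr
        linarith
    _ = _ := by ring

theorem coxcs_deviation_bound_general {Ω : Type*} [MeasurableSpace Ω] (μ : Measure Ω)
    [IsProbabilityMeasure μ] {ι : Type*} (M : Finset ι) (n q : ℕ)
    (M₀ c₂ K₂ κ ε₁ ε₂ : ℝ)
    (θ : ι → EuclideanSpace ℝ (Fin (q + 1)))
    (θhat : ι → Ω → EuclideanSpace ℝ (Fin (q + 1)))
    (Vhat : ι → Ω → EuclideanSpace ℝ (Fin (q + 1)))   -- `V̂_j(θ̂_j)`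
    (Vθ : ι → Ω → EuclideanSpace ℝ (Fin (q + 1)))     -- `V̂_j(θ_j)`
    (W : Fin n → ι → Ω → EuclideanSpace ℝ (Fin (q + 1)))
    (Δ : ι → Ω → EuclideanSpace ℝ (Fin (q + 1)))
    (hn : 1 ≤ n) (hM₀ : 0 < M₀) (hc₂ : 0 < c₂) (hK₂ : 0 < K₂)
    (hε₁ : ε₁ ≤ (n : ℝ) ^ (-κ) / 2) (hε₂ : 0 ≤ ε₂)
    -- (ii) the sample score vanishes at `θ̂_j` and the inversion condition holds
    (hzero : ∀ j ∈ M, ∀ᵐ ω ∂μ, Vhat j ω = 0)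
    (hinv : ∀ j ∈ M, ∀ᵐ ω ∂μ,
      M₀ * ‖θhat j ω - θ j‖ ≤ ‖Vhat j ω - Vθ j ω‖)
    -- (iii) i.i.d.-plus-remainder representation of the sample score at `θ_j`
    (hrep : ∀ j ∈ M, ∀ ω, Vθ j ω = (n : ℝ)⁻¹ • (∑ i, W i j ω) + Δ j ω)
    (hindep : ∀ j ∈ M, iIndepFun (fun i => W i j) μ)
    (hident : ∀ j ∈ M, ∀ i i' : Fin n, IdentDistrib (W i j) (W i' j) μ μ)
    (hmean : ∀ j ∈ M, ∀ (i : Fin n) (k : Fin (q + 1)), ∫ ω, W i j ω k ∂μ = 0)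
    (hbdd : ∀ j ∈ M, ∀ (i : Fin n) (k : Fin (q + 1)), ∀ᵐ ω ∂μ, |W i j ω k| ≤ K₂)
    -- (iv) the remainders are uniformly small with probability at least `1 − ε₂`
    (hΔ : μ {ω | ∃ j ∈ M, M₀ * c₂ * ε₁ / 2 < ‖Δ j ω‖} ≤ ENNReal.ofReal ε₂) :
    μ {ω | ∃ j ∈ M,
        c₂ / 2 * (n : ℝ) ^ (-κ) < |θhat j ω (Fin.last q) - θ j (Fin.last q)|}
      ≤ ENNReal.ofReal
          (2 * M.card * (q + 1) *
              Real.exp (-(M₀ ^ 2 * c₂ ^ 2 / (32 * (q + 1) * (K₂ ^ 2 + 1)))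
                * (n : ℝ) ^ (1 - 2 * κ))
            + ε₂) := by
  have hn0 : (0 : ℝ) < n := by exact_mod_cast hn
  set a := (n : ℝ) ^ (-κ)
  set r := n * (M₀ * (c₂ * a / 4))
  set E := Real.exp
    (-(M₀ ^ 2 * c₂ ^ 2 / (32 * (q + 1) * (K₂ ^ 2 + 1))) * (n : ℝ) ^ (1 - 2 * κ))
  set D := {ω | ∃ j ∈ M, M₀ * c₂ * ε₁ / 2 < ‖Δ j ω‖}
  have hbad : {ω | ∃ j ∈ M, c₂ / 2 * a < |θhat j ω (Fin.last q) - θ j (Fin.last q)|}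
      ≤ᵐ[μ] (D ∪ ⋃ j ∈ M, {ω | r < ‖∑ i, W i j ω‖} : Set Ω) := by
    filter_upwards [(ae_ball_iff M.countable_toSet).2 hzero,
      (ae_ball_iff M.countable_toSet).2 hinv] with ω hzeroω hinvω ⟨j, hj, hdev⟩
    refine or_iff_not_imp_left.2 fun hD => Set.mem_biUnion hj ?_
    have hinvj := hinvω j hj
    rw [hzeroω j hj, zero_sub, norm_neg, hrep j hj ω] at hinvj
    exact lt_norm_of_mul_norm_sub_le_norm_smul_add hn0 hM₀ hc₂ hε₁ hinvj
      (not_lt.1 fun h => hD ⟨j, hj, h⟩) hdev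
  have hsample : ∀ j ∈ M, μ {ω | r < ‖∑ i, W i j ω‖} ≤ ENNReal.ofReal (2 * (q + 1) * E) := by
    intro j hj
    refine (measure_norm_sum_gt_le_of_iIndepFun (hindep j hj)
      (fun i => (hident j hj i i).aemeasurable_fst) (hbdd j hj) (hmean j hj)
      (by positivity)).trans (ENNReal.ofReal_le_ofReal ?_)
    simp only [Fintype.card_fin, Nat.cast_add, Nat.cast_one]
    exact mul_le_mul_of_nonneg_left
      (exp_neg_sq_div_le_exp_neg_mul_rpow hn0 (by positivity) hK₂.ne') (by positivity)
  calc μ {ω | ∃ j ∈ M, c₂ / 2 * a < |θhat j ω (Fin.last q) - θ j (Fin.last q)|}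
      ≤ μ D + ∑ j ∈ M, μ {ω | r < ‖∑ i, W i j ω‖} :=
        (measure_mono_ae hbad).trans ((measure_union_le _ _).trans
          (add_le_add_right (measure_biUnion_finset_le _ _) _))
    _ ≤ ENNReal.ofReal ε₂ + ∑ j ∈ M, ENNReal.ofReal (2 * (q + 1) * E) :=
        add_le_add hΔ (Finset.sum_le_sum hsample)
    _ = _ := by
        rw [Finset.sum_const, nsmul_eq_mul, ← ENNReal.ofReal_natCast,
          ← ENNReal.ofReal_mul (Nat.cast_nonneg _), ← ENNReal.ofReal_add hε₂ (by positivity),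
          add_comm]
        ring_nf

/-- Theorem 3, part 1, fixed-sample form: deviation bound for the
conditional maximum partial likelihood screening estimators. -/
theorem coxcs_deviation_bound {Ω : Type*} [MeasurableSpace Ω] (μ : Measure Ω)
    [IsProbabilityMeasure μ] {ι : Type*} (M : Finset ι) (n q : ℕ)
    (M₀ c₂ K₂ κ ε₁ ε₂ : ℝ)
    (θ : ι → EuclideanSpace ℝ (Fin (q + 1)))
    (θhat : ι → Ω → EuclideanSpace ℝ (Fin (q + 1)))
    (Vhat : ι → Ω → EuclideanSpace ℝ (Fin (q + 1)))   -- `V̂_j(θ̂_j)`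
    (Vθ : ι → Ω → EuclideanSpace ℝ (Fin (q + 1)))     -- `V̂_j(θ_j)`
    (W : Fin n → ι → Ω → EuclideanSpace ℝ (Fin (q + 1)))
    (Δ : ι → Ω → EuclideanSpace ℝ (Fin (q + 1)))
    (hn : 1 ≤ n) (hM₀ : 0 < M₀) (hc₂ : 0 < c₂) (hK₂ : 0 < K₂)
    (hκ0 : 0 < κ) (hκ : κ < 1 / 2)
    (hε₁0 : 0 < ε₁) (hε₁ : ε₁ ≤ (n : ℝ) ^ (-κ) / 2) (hε₂ : 0 ≤ ε₂)
    (hnκ : (n : ℝ) ^ (-κ) ≤ 6 / (K₂ * M₀ * c₂))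
    -- (ii) the sample score vanishes at `θ̂_j` and the inversion condition holds
    (hzero : ∀ j ∈ M, ∀ᵐ ω ∂μ, Vhat j ω = 0)
    (hinv : ∀ j ∈ M, ∀ᵐ ω ∂μ,
      M₀ * ‖θhat j ω - θ j‖ ≤ ‖Vhat j ω - Vθ j ω‖)
    -- (iii) i.i.d.-plus-remainder representation of the sample score at `θ_j`
    (hrep : ∀ j ∈ M, ∀ ω, Vθ j ω = (n : ℝ)⁻¹ • (∑ i, W i j ω) + Δ j ω)
    (hindep : ∀ j ∈ M, iIndepFun (fun i => W i j) μ)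
    (hident : ∀ j ∈ M, ∀ i i' : Fin n, IdentDistrib (W i j) (W i' j) μ μ)
    (hmean : ∀ j ∈ M, ∀ (i : Fin n) (k : Fin (q + 1)), ∫ ω, W i j ω k ∂μ = 0)
    (hbdd : ∀ j ∈ M, ∀ (i : Fin n) (k : Fin (q + 1)), ∀ᵐ ω ∂μ, |W i j ω k| ≤ K₂)
    -- (iv) the remainders are uniformly small with probability at least `1 − ε₂`
    (hΔ : μ {ω | ∃ j ∈ M, M₀ * c₂ * ε₁ / 2 < ‖Δ j ω‖} ≤ ENNReal.ofReal ε₂) :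
    μ {ω | ∃ j ∈ M,
        c₂ / 2 * (n : ℝ) ^ (-κ) < |θhat j ω (Fin.last q) - θ j (Fin.last q)|}
      ≤ ENNReal.ofReal
          (2 * M.card * (q + 1) *
              Real.exp (-(M₀ ^ 2 * c₂ ^ 2 / (32 * (q + 1) * (K₂ ^ 2 + 1)))
                * (n : ℝ) ^ (1 - 2 * κ))
            + ε₂) :=
  coxcs_deviation_bound_general μ M n q M₀ c₂ K₂ κ ε₁ ε₂ θ θhat Vhat Vθ W Δ hn hM₀ hc₂ hK₂ hε₁ hε₂
    hzero hinv hrep hindep hident hmean hbdd hΔ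
end

section
/- (Theorem 3, part 2, sure screening, fixed-sample form) In addition to the hypotheses of the fixed-sample deviation bound — namely: n ≥ 1, q ≥ 0, finite M with |M| = w, constants M₀ > 0, c₂ > 0, K₂ > 0, 0 < κ < 1/2, 0 < ε₁ ≤ n^{−κ}/2, ε₂ ≥ 0, n^{−κ} ≤ 6/(K₂ M₀ c₂); for each j ∈ M: θ_j ∈ ℝ^{q+1} fixed and θ̂_j random with V̂_j(θ̂_j) = 0 a.s., M₀‖θ̂_j − θ_j‖₂ ≤ ‖V̂_j(θ̂_j) − V̂_j(θ_j)‖₂ a.s., V̂_j(θ_j) = (1/n)Σ_{i=1}^n W_{i,j} + Δ_j with W_{1,j},…,W_{n,j} i.i.d. mean-zero with coordinates bounded by K₂ a.s., and P(∃ j ∈ M: ‖Δ_j‖₂ > M₀c₂ε₁/2) ≤ ε₂ — assume further that the last coordinate β_j of θ_j satisfies |β_j| ≥ c₂ n^{−κ} for every j ∈ M. Then, with threshold γ_n := (c₂/4) n^{−κ} and β̂_j the last coordinate of θ̂_j, P( min_{j∈M} |β̂_j| > γ_n ) ≥ 1 − 2 w (q+1) exp(−c₃ n^{1−2κ}) −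 ε₂, where c₃ := M₀² c₂² / (32 (q+1) (K₂² + 1)); that is, with this probability every index in M survives the screening threshold γ_n. -/
/-!
Off two bad events, every screened coefficient survives. On the event where all remainders
`Δ_j` and all normalised sums `n⁻¹ ∑ᵢ W_{i,j}` have norm at most `M₀ c₂ n^{-κ} / 4`, the score
`V̂_j(θ_j)` has norm at most `M₀ c₂ n^{-κ} / 2`, so the inversion condition puts `θ̂_j` within
`c₂ n^{-κ} / 2` of `θ_j`, and the last coordinate keeps at least half of `|β_j| ≥ c₂ n^{-κ}`.
The remainder event has probability at most `ε₂` by assumption. The sum event is controlled by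
Hoeffding's inequality in each of the `q + 1` coordinates and a union bound over `j ∈ M`; the
coordinate threshold is the norm threshold divided by `√(q + 1)`, which puts `q + 1` into `c₃`.
-/

open MeasureTheory ProbabilityTheory Real
open scoped ENNReal NNReal

lemma EuclideanSpace.norm_le_sqrt_card_mul_of_abs_apply_le {ι : Type*} [Fintype ι]
    {x : EuclideanSpace ℝ ι} {t : ℝ} (ht : 0 ≤ t) (hx : ∀ k, |x k| ≤ t) :
    ‖x‖ ≤ √(Fintype.card ι) * t := by
  rw [EuclideanSpace.norm_eq, ← sqrt_sq ht, ← sqrt_mul (Nat.cast_nonneg _)]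
  gcongr
  calc ∑ k, ‖x k‖ ^ 2 ≤ ∑ _k : ι, t ^ 2 := by
        gcongr with k; rw [norm_eq_abs]; exact hx k
    _ = Fintype.card ι * t ^ 2 := by simp

lemma EuclideanSpace.sub_le_abs_apply_of_norm_sub_le {ι : Type*} [Fintype ι]
    {x y : EuclideanSpace ℝ ι} {b δ : ℝ} (k : ι) (hxy : ‖x - y‖ ≤ δ) (hx : b ≤ |x k|) :
    b - δ ≤ |y k| := by
  have := (abs_sub_abs_le_abs_sub (x k) (y k)).trans ((PiLp.norm_apply_le (x - y) k).trans hxy)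
  linarith

namespace MeasureTheory

variable {Ω : Type*} [MeasurableSpace Ω] {μ : Measure Ω}

lemma measure_biUnion_finset_le_ofReal_card_mul {ι : Type*} (s : Finset ι) {A : ι → Set Ω}
    {p : ℝ} (h : ∀ j ∈ s, μ (A j) ≤ ENNReal.ofReal p) :
    μ (⋃ j ∈ s, A j) ≤ ENNReal.ofReal (s.card * p) := by
  refine (measure_biUnion_finset_le s A).trans ((Finset.sum_le_card_nsmul _ _ _ h).trans_eq ?_)
  rw [nsmul_eq_mul, ← ENNReal.ofReal_natCast, ← ENNReal.ofReal_mul (Nat.cast_nonneg _)]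

lemma one_sub_sub_le_measure [IsProbabilityMeasure μ] {A B T : Set Ω} {a b : ℝ≥0∞}
    (hT : ∀ᵐ ω ∂μ, ω ∉ A → ω ∉ B → ω ∈ T) (hA : μ A ≤ a) (hB : μ B ≤ b) :
    1 - a - b ≤ μ T := by
  rw [tsub_le_iff_right, tsub_le_iff_right]
  have hcover : (Set.univ : Set Ω) ≤ᵐ[μ] (T ∪ B ∪ A : Set Ω) := by
    filter_upwards [hT] with ω hω _
    show ω ∈ T ∪ B ∪ A
    simp only [Set.mem_union]
    tauto
  calc 1 = μ Set.univ := measure_univ.symm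
    _ ≤ μ (T ∪ B ∪ A) := measure_mono_ae hcover
    _ ≤ μ (T ∪ B) + μ A := measure_union_le _ _
    _ ≤ μ T + μ B + μ A := by grw [measure_union_le T B]
    _ ≤ μ T + b + a := by gcongr

end MeasureTheory

namespace ProbabilityTheory

variable {Ω : Type*} [MeasurableSpace Ω] {μ : Measure Ω}

lemma HasSubgaussianMGF.measure_abs_gt_le [IsFiniteMeasure μ] {X : Ω → ℝ} {c : ℝ≥0}
    (h : HasSubgaussianMGF X c μ) {ε : ℝ} (hε : 0 ≤ ε) :
    μ {ω | ε < |X ω|} ≤ ENNReal.ofReal (2 * exp (-ε ^ 2 / (2 * c))) := by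
  have hsplit : {ω | ε < |X ω|} ⊆ {ω | ε ≤ X ω} ∪ {ω | ε ≤ (-X) ω} :=
    fun ω (hω : ε < |X ω|) ↦ by
      rcases lt_abs.1 hω with h | h
      exacts [Or.inl h.le, Or.inr h.le]
  calc μ {ω | ε < |X ω|} ≤ μ {ω | ε ≤ X ω} + μ {ω | ε ≤ (-X) ω} :=
        (measure_mono hsplit).trans (measure_union_le _ _)
    _ = ENNReal.ofReal (μ.real {ω | ε ≤ X ω} + μ.real {ω | ε ≤ (-X) ω}) := by
        rw [ENNReal.ofReal_add measureReal_nonneg measureReal_nonneg, ofReal_measureReal,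
          ofReal_measureReal]
    _ ≤ ENNReal.ofReal (2 * exp (-ε ^ 2 / (2 * c))) := by
        gcongr
        linarith [h.measure_ge_le hε, h.neg.measure_ge_le hε]

lemma measure_abs_sum_gt_le_of_iIndepFun [IsProbabilityMeasure μ] {ι : Type*}
    {X : ι → Ω → ℝ} (hind : iIndepFun X μ) (hmeas : ∀ i, AEMeasurable (X i) μ) {K : ℝ}
    (hbdd : ∀ i, ∀ᵐ ω ∂μ, |X i ω| ≤ K) (hmean : ∀ i, μ[X i] = 0) (s : Finset ι) {ε : ℝ}
    (hε : 0 ≤ ε) :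
    μ {ω | ε < |∑ i ∈ s, X i ω|} ≤
      ENNReal.ofReal (2 * exp (-ε ^ 2 / (2 * s.card * K ^ 2))) := by
  have hoeffding (i : ι) : HasSubgaussianMGF (X i) ((‖K - -K‖₊ / 2) ^ 2) μ :=
    hasSubgaussianMGF_of_mem_Icc_of_integral_eq_zero (hmeas i)
      (by filter_upwards [hbdd i] with ω h using abs_le.1 h) (hmean i)
  convert (HasSubgaussianMGF.sum_of_iIndepFun hind (s := s)
    fun i _ ↦ hoeffding i).measure_abs_gt_le hε using 5
  simp only [Finset.sum_const, nsmul_eq_mul, NNReal.coe_mul, NNReal.coe_natCast, NNReal.coe_pow,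
    NNReal.coe_div, coe_nnnorm, norm_eq_abs, sub_neg_eq_add, NNReal.coe_ofNat]
  rw [← two_mul, abs_mul, abs_two, mul_div_cancel_left₀ _ two_ne_zero, sq_abs]
  ring

lemma measure_norm_sum_gt_le_of_iIndepFun [IsProbabilityMeasure μ] {ι d : Type*} [Fintype d]
    {W : ι → Ω → EuclideanSpace ℝ d} (hind : iIndepFun W μ)
    (hmeas : ∀ i, AEMeasurable (W i) μ) {K : ℝ}
    (hbdd : ∀ i k, ∀ᵐ ω ∂μ, |W i ω k| ≤ K) (hmean : ∀ i k, ∫ ω, W i ω k ∂μ = 0)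
    (s : Finset ι) {t : ℝ} (ht : 0 ≤ t) :
    μ {ω | t < ‖∑ i ∈ s, W i ω‖} ≤ ENNReal.ofReal
      (2 * Fintype.card d * exp (-t ^ 2 / (2 * Fintype.card d * s.card * K ^ 2))) := by
  set ε := t / √(Fintype.card d)
  have hε : 0 ≤ ε := by positivity
  have hcover : {ω | t < ‖∑ i ∈ s, W i ω‖} ⊆ ⋃ k, {ω | ε < |∑ i ∈ s, W i ω k|} := by
    intro ω (hω : t < _)
    by_contra! hsmall
    simp only [Set.mem_iUnion, not_exists] at hsmall
    refine (lt_of_lt_of_le hω ?_).false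
    calc ‖∑ i ∈ s, W i ω‖ ≤ √(Fintype.card d) * ε :=
          EuclideanSpace.norm_le_sqrt_card_mul_of_abs_apply_le hε
            fun k ↦ by simpa using not_lt.1 (hsmall k)
      _ ≤ t := by
          rcases eq_or_ne (√(Fintype.card d : ℝ)) 0 with h | h
          · simpa [h] using ht
          · rw [mul_div_cancel₀ _ h]
  calc μ {ω | t < ‖∑ i ∈ s, W i ω‖} ≤ ∑ k, μ {ω | ε < |∑ i ∈ s, W i ω k|} :=
        (measure_mono hcover).trans (measure_iUnion_fintype_le μ _)
    _ ≤ ∑ _k : d, ENNReal.ofReal (2 * exp (-ε ^ 2 / (2 * s.card * K ^ 2))) := by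
        gcongr with k
        exact measure_abs_sum_gt_le_of_iIndepFun
          (hind.comp (fun _ x ↦ x k) fun _ ↦ by fun_prop)
          (fun i ↦ by fun_prop) (fun i ↦ hbdd i k) (fun i ↦ hmean i k) s hε
    _ = _ := by
        rw [Finset.sum_const, Finset.card_univ, nsmul_eq_mul, ← ENNReal.ofReal_natCast,
          ← ENNReal.ofReal_mul (Nat.cast_nonneg _), div_pow, sq_sqrt (Nat.cast_nonneg _)]
        ring_nf

end ProbabilityTheory

lemma neg_sq_div_le_neg_mul_rpow {n : ℕ} (hn : 0 < n) {m K a κ : ℝ} (hm : 0 < m) (hK : 0 < K) :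
    -(n * (a * (n : ℝ) ^ (-κ))) ^ 2 / (2 * m * n * K ^ 2) ≤
      -(a ^ 2 / (2 * m * (K ^ 2 + 1))) * (n : ℝ) ^ (1 - 2 * κ) := by
  have hnR : (0 : ℝ) < n := Nat.cast_pos.2 hn
  have hpow : (n : ℝ) ^ (1 - 2 * κ) = n * ((n : ℝ) ^ (-κ)) ^ 2 := by
    rw [show 1 - 2 * κ = 1 + -κ * 2 by ring, rpow_add hnR, rpow_one, rpow_mul hnR.le, rpow_two]
  calc -(n * (a * (n : ℝ) ^ (-κ))) ^ 2 / (2 * m * n * K ^ 2)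
      = -(a ^ 2 / (2 * m * K ^ 2)) * (n * ((n : ℝ) ^ (-κ)) ^ 2) := by
        field_simp
    _ ≤ -(a ^ 2 / (2 * m * (K ^ 2 + 1))) * (n : ℝ) ^ (1 - 2 * κ) := by
        rw [hpow]; gcongr; linarith

lemma lt_abs_apply_of_score_le {ι : Type*} [Fintype ι] {n : ℕ} (hn : 0 < n) {M₀ b : ℝ}
    (hM₀ : 0 < M₀) (hb : 0 < b) {θ θhat S Δ : EuclideanSpace ℝ ι} (k : ι)
    (hinv : M₀ * ‖θhat - θ‖ ≤ ‖(n : ℝ)⁻¹ • S + Δ‖)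
    (hS : ‖S‖ ≤ n * (M₀ * b / 4)) (hΔ : ‖Δ‖ ≤ M₀ * b / 4) (hβ : b ≤ |θ k|) :
    b / 4 < |θhat k| := by
  have hnR : (0 : ℝ) < n := Nat.cast_pos.2 hn
  have hscore : ‖(n : ℝ)⁻¹ • S + Δ‖ ≤ M₀ * (b / 2) :=
    calc ‖(n : ℝ)⁻¹ • S + Δ‖ ≤ (n : ℝ)⁻¹ * ‖S‖ + ‖Δ‖ := by
          grw [norm_add_le, norm_smul, norm_inv, RCLike.norm_natCast]
      _ ≤ (n : ℝ)⁻¹ * (n * (M₀ * b / 4)) + M₀ * b / 4 := by gcongr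
      _ = M₀ * (b / 2) := by field_simp; ring
  have hclose : ‖θ - θhat‖ ≤ b / 2 := by
    rw [norm_sub_rev]; exact le_of_mul_le_mul_left (hinv.trans hscore) hM₀
  linarith [EuclideanSpace.sub_le_abs_apply_of_norm_sub_le k hclose hβ]

theorem coxcs_sure_screening_general {Ω : Type*} [MeasurableSpace Ω] (μ : Measure Ω)
    [IsProbabilityMeasure μ] {ι : Type*} (M : Finset ι) (n q : ℕ)
    (M₀ c₂ K₂ κ ε₁ ε₂ : ℝ)
    (θ : ι → EuclideanSpace ℝ (Fin (q + 1)))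
    (θhat : ι → Ω → EuclideanSpace ℝ (Fin (q + 1)))
    (Vhat : ι → Ω → EuclideanSpace ℝ (Fin (q + 1)))   -- `V̂_j(θ̂_j)`
    (Vθ : ι → Ω → EuclideanSpace ℝ (Fin (q + 1)))     -- `V̂_j(θ_j)`
    (W : Fin n → ι → Ω → EuclideanSpace ℝ (Fin (q + 1)))
    (Δ : ι → Ω → EuclideanSpace ℝ (Fin (q + 1)))
    (hn : 1 ≤ n) (hM₀ : 0 < M₀) (hc₂ : 0 < c₂) (hK₂ : 0 < K₂)
    (hε₁ : ε₁ ≤ (n : ℝ) ^ (-κ) / 2)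
    -- (ii) the sample score vanishes at `θ̂_j` and the inversion condition holds
    (hzero : ∀ j ∈ M, ∀ᵐ ω ∂μ, Vhat j ω = 0)
    (hinv : ∀ j ∈ M, ∀ᵐ ω ∂μ,
      M₀ * ‖θhat j ω - θ j‖ ≤ ‖Vhat j ω - Vθ j ω‖)
    -- (iii) i.i.d.-plus-remainder representation of the sample score at `θ_j`
    (hrep : ∀ j ∈ M, ∀ ω, Vθ j ω = (n : ℝ)⁻¹ • (∑ i, W i j ω) + Δ j ω)
    (hindep : ∀ j ∈ M, iIndepFun (fun i => W i j) μ)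
    (hident : ∀ j ∈ M, ∀ i i' : Fin n, IdentDistrib (W i j) (W i' j) μ μ)
    (hmean : ∀ j ∈ M, ∀ (i : Fin n) (k : Fin (q + 1)), ∫ ω, W i j ω k ∂μ = 0)
    (hbdd : ∀ j ∈ M, ∀ (i : Fin n) (k : Fin (q + 1)), ∀ᵐ ω ∂μ, |W i j ω k| ≤ K₂)
    -- (iv) the remainders are uniformly small with probability at least `1 − ε₂`
    (hΔ : μ {ω | ∃ j ∈ M, M₀ * c₂ * ε₁ / 2 < ‖Δ j ω‖} ≤ ENNReal.ofReal ε₂)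
    -- the population coefficients are bounded away from zero
    (hβ : ∀ j ∈ M, c₂ * (n : ℝ) ^ (-κ) ≤ |θ j (Fin.last q)|) :
    1 - ENNReal.ofReal
          (2 * M.card * (q + 1) *
            Real.exp (-(M₀ ^ 2 * c₂ ^ 2 / (32 * (q + 1) * (K₂ ^ 2 + 1)))
              * (n : ℝ) ^ (1 - 2 * κ)))
      - ENNReal.ofReal ε₂
      ≤ μ {ω | ∀ j ∈ M, c₂ / 4 * (n : ℝ) ^ (-κ) < |θhat j ω (Fin.last q)|} := by
  set r : ℝ := (n : ℝ) ^ (-κ)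
  have hr : 0 < r := rpow_pos_of_pos (Nat.cast_pos.2 hn) _
  set t : ℝ := n * (M₀ * c₂ / 4 * r)
  set E : ℝ := exp (-(M₀ ^ 2 * c₂ ^ 2 / (32 * (q + 1) * (K₂ ^ 2 + 1))) * (n : ℝ) ^ (1 - 2 * κ))
  have hsum_tail (j : ι) (hj : j ∈ M) :
      μ {ω | t < ‖∑ i, W i j ω‖} ≤ ENNReal.ofReal (2 * (q + 1) * E) := by
    refine (measure_norm_sum_gt_le_of_iIndepFun (hindep j hj)
      (fun i ↦ (hident j hj i i).aemeasurable_fst) (hbdd j hj) (hmean j hj) Finset.univ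
      (by positivity)).trans ?_
    simp only [Finset.card_univ, Fintype.card_fin, Nat.cast_add, Nat.cast_one]
    gcongr
    refine exp_le_exp.2 ?_
    convert neg_sq_div_le_neg_mul_rpow hn (by positivity : (0 : ℝ) < q + 1) hK₂ using 3
    field_simp
    ring
  refine one_sub_sub_le_measure ?_
    ((measure_biUnion_finset_le_ofReal_card_mul M hsum_tail).trans_eq (by congr 1; ring)) hΔ
  filter_upwards [(ae_ball_iff M.countable_toSet).2 hzero,
    (ae_ball_iff M.countable_toSet).2 hinv] with ω hVhat hθhat hsum_small hΔ_small j hj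
  simp only [Set.mem_iUnion, Set.mem_ofPred_eq, not_exists, not_and, not_lt] at hsum_small hΔ_small
  have hscore : M₀ * ‖θhat j ω - θ j‖ ≤ ‖(n : ℝ)⁻¹ • ∑ i, W i j ω + Δ j ω‖ := by
    simpa only [hVhat j hj, zero_sub, norm_neg, hrep j hj ω] using hθhat j hj
  have hΔj : ‖Δ j ω‖ ≤ M₀ * (c₂ * r) / 4 := by
    grw [hΔ_small j hj, hε₁]
    exact le_of_eq (by ring)
  rw [div_mul_eq_mul_div]
  exact lt_abs_apply_of_score_le hn hM₀ (by positivity) (Fin.last q) hscore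
    ((hsum_small j hj).trans_eq (by ring)) hΔj (hβ j hj)

/-- Theorem 3, part 2, sure screening, fixed-sample form: with threshold
`γ_n = (c₂/4) n^{−κ}`, every index in `M` survives the screening threshold with
probability at least `1 − 2w(q+1)exp(−c₃ n^{1−2κ}) − ε₂`. -/
theorem coxcs_sure_screening {Ω : Type*} [MeasurableSpace Ω] (μ : Measure Ω)
    [IsProbabilityMeasure μ] {ι : Type*} (M : Finset ι) (n q : ℕ)
    (M₀ c₂ K₂ κ ε₁ ε₂ : ℝ)
    (θ : ι → EuclideanSpace ℝ (Fin (q + 1)))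
    (θhat : ι → Ω → EuclideanSpace ℝ (Fin (q + 1)))
    (Vhat : ι → Ω → EuclideanSpace ℝ (Fin (q + 1)))   -- `V̂_j(θ̂_j)`
    (Vθ : ι → Ω → EuclideanSpace ℝ (Fin (q + 1)))     -- `V̂_j(θ_j)`
    (W : Fin n → ι → Ω → EuclideanSpace ℝ (Fin (q + 1)))
    (Δ : ι → Ω → EuclideanSpace ℝ (Fin (q + 1)))
    (hn : 1 ≤ n) (hM₀ : 0 < M₀) (hc₂ : 0 < c₂) (hK₂ : 0 < K₂)
    (hκ0 : 0 < κ) (hκ : κ < 1 / 2)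
    (hε₁0 : 0 < ε₁) (hε₁ : ε₁ ≤ (n : ℝ) ^ (-κ) / 2) (hε₂ : 0 ≤ ε₂)
    (hnκ : (n : ℝ) ^ (-κ) ≤ 6 / (K₂ * M₀ * c₂))
    -- (ii) the sample score vanishes at `θ̂_j` and the inversion condition holds
    (hzero : ∀ j ∈ M, ∀ᵐ ω ∂μ, Vhat j ω = 0)
    (hinv : ∀ j ∈ M, ∀ᵐ ω ∂μ,
      M₀ * ‖θhat j ω - θ j‖ ≤ ‖Vhat j ω - Vθ j ω‖)
    -- (iii) i.i.d.-plus-remainder representation of the sample score at `θ_j`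
    (hrep : ∀ j ∈ M, ∀ ω, Vθ j ω = (n : ℝ)⁻¹ • (∑ i, W i j ω) + Δ j ω)
    (hindep : ∀ j ∈ M, iIndepFun (fun i => W i j) μ)
    (hident : ∀ j ∈ M, ∀ i i' : Fin n, IdentDistrib (W i j) (W i' j) μ μ)
    (hmean : ∀ j ∈ M, ∀ (i : Fin n) (k : Fin (q + 1)), ∫ ω, W i j ω k ∂μ = 0)
    (hbdd : ∀ j ∈ M, ∀ (i : Fin n) (k : Fin (q + 1)), ∀ᵐ ω ∂μ, |W i j ω k| ≤ K₂)
    -- (iv) the remainders are uniformly small with probability at least `1 − ε₂`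
    (hΔ : μ {ω | ∃ j ∈ M, M₀ * c₂ * ε₁ / 2 < ‖Δ j ω‖} ≤ ENNReal.ofReal ε₂)
    -- the population coefficients are bounded away from zero
    (hβ : ∀ j ∈ M, c₂ * (n : ℝ) ^ (-κ) ≤ |θ j (Fin.last q)|) :
    1 - ENNReal.ofReal
          (2 * M.card * (q + 1) *
            Real.exp (-(M₀ ^ 2 * c₂ ^ 2 / (32 * (q + 1) * (K₂ ^ 2 + 1)))
              * (n : ℝ) ^ (1 - 2 * κ)))
      - ENNReal.ofReal ε₂
      ≤ μ {ω | ∀ j ∈ M, c₂ / 4 * (n : ℝ) ^ (-κ) < |θhat j ω (Fin.last q)|} :=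
  coxcs_sure_screening_general μ M n q M₀ c₂ K₂ κ ε₁ ε₂ θ θhat Vhat Vθ W Δ hn hM₀ hc₂ hK₂ hε₁ hzero
    hinv hrep hindep hident hmean hbdd hΔ hβ
end
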